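/- arXiv:1508.02988 — 2 statements merged into one kernel-verified Lean document; each statement's English description precedes it below -/
import Mathlib

section
/- Let L₁ ∈ R^{n×n} be symmetric positive definite and Γ ∈ R^{r×r} a matrix similar to a symmetric positive semidefinite matrix (i.e., Γ = Q⁻¹ M Q with M symmetric positive semidefinite). Then the Sylvester operator V ↦ L₁ V + V Γᵀ on R^{n×r} is invertible. -/
/-!
Conjugating by `Q` reduces `L₁ V + V Γᵀ = 0` to `L₁ W + W M = 0` with `W = V Qᵀ`. Multiplying on the
left by `Wᴴ` and taking traces gives `tr (Wᴴ L₁ W) + tr (W M Wᴴ) = 0`, a sum of traces of positive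
semidefinite matrices, so `Wᴴ L₁ W = 0`, and positive definiteness of `L₁` forces `W = 0`. An
injective linear endomorphism of a finite-dimensional space is bijective.
-/

open Matrix

open scoped ComplexOrder

namespace Matrix

variable {m k R 𝕜 : Type*} [Fintype m] [Fintype k]

def sylvesterMap [CommSemiring R] (A : Matrix m m R) (B : Matrix k k R) :
    Matrix m k R →ₗ[R] Matrix m k R where
  toFun V := A * V + V * B
  map_add' U V := by simp only [Matrix.mul_add, Matrix.add_mul]; abel
  map_smul' c V := by simp only [Matrix.mul_smul, Matrix.smul_mul, smul_add, RingHom.id_apply]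

@[simp]
lemma sylvesterMap_apply [CommSemiring R] (A : Matrix m m R) (B : Matrix k k R)
    (V : Matrix m k R) : sylvesterMap A B V = A * V + V * B :=
  rfl

lemma sylvesterMap_conj [CommRing R] [DecidableEq k] (A : Matrix m m R) (C P : Matrix k k R)
    (hP : IsUnit P.det) (V : Matrix m k R) :
    sylvesterMap A (P * C * P⁻¹) V = sylvesterMap A C (V * P) * P⁻¹ := by
  simp only [sylvesterMap_apply, Matrix.add_mul, Matrix.mul_assoc,
    mul_nonsing_inv _ hP, Matrix.mul_one]

variable [RCLike 𝕜]

lemma PosDef.eq_zero_of_conjTranspose_mul_mul_eq_zero {L : Matrix m m 𝕜} (hL : L.PosDef)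
    {W : Matrix m k 𝕜} (h : Wᴴ * L * W = 0) : W = 0 := by
  refine ext_iff_mulVec.mpr fun x => ?_
  rw [zero_mulVec]
  by_contra hx
  have hquad : star (W *ᵥ x) ⬝ᵥ (L *ᵥ (W *ᵥ x)) = star x ⬝ᵥ ((Wᴴ * L * W) *ᵥ x) := by
    rw [star_mulVec, dotProduct_mulVec, vecMul_vecMul, ← dotProduct_mulVec, mulVec_mulVec,
      Matrix.mul_assoc]
  have hpos := hL.dotProduct_mulVec_pos hx
  rw [hquad, h, zero_mulVec, dotProduct_zero] at hpos
  exact lt_irrefl 0 hpos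

theorem PosDef.eq_zero_of_mul_add_mul_eq_zero {L : Matrix m m 𝕜} {M : Matrix k k 𝕜}
    {W : Matrix m k 𝕜} (hL : L.PosDef) (hM : M.PosSemidef) (h : L * W + W * M = 0) :
    W = 0 := by
  have hLW := hL.posSemidef.conjTranspose_mul_mul_same W
  have hWM := hM.mul_mul_conjTranspose_same W
  have htrace : (Wᴴ * L * W).trace + (W * M * Wᴴ).trace = 0 := by
    rw [trace_mul_comm (W * M), Matrix.mul_assoc, ← trace_add, ← Matrix.mul_add, h,
      Matrix.mul_zero, trace_zero]
  have hzero : (Wᴴ * L * W).trace = 0 :=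
    ((add_eq_zero_iff_of_nonneg hLW.trace_nonneg hWM.trace_nonneg).mp htrace).1
  exact hL.eq_zero_of_conjTranspose_mul_mul_eq_zero (hLW.trace_eq_zero_iff.mp hzero)

theorem injective_sylvesterMap_conj [DecidableEq k] {L : Matrix m m 𝕜} {M P : Matrix k k 𝕜}
    (hL : L.PosDef) (hM : M.PosSemidef) (hP : IsUnit P.det) :
    Function.Injective (sylvesterMap L (P * M * P⁻¹)) := by
  refine (injective_iff_map_eq_zero _).mpr fun V hV => ?_
  rw [sylvesterMap_conj L M P hP] at hV
  have hVP : V * P = 0 := by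
    refine hL.eq_zero_of_mul_add_mul_eq_zero hM ?_
    rw [← sylvesterMap_apply, ← nonsing_inv_mul_cancel_right _ (sylvesterMap L M (V * P)) hP, hV,
      Matrix.zero_mul]
  rw [← mul_nonsing_inv_cancel_right _ V hP, hVP, Matrix.zero_mul]

theorem bijective_sylvesterMap_conj [DecidableEq k] {L : Matrix m m 𝕜} {M P : Matrix k k 𝕜}
    (hL : L.PosDef) (hM : M.PosSemidef) (hP : IsUnit P.det) :
    Function.Bijective (sylvesterMap L (P * M * P⁻¹)) :=
  have hinj := injective_sylvesterMap_conj hL hM hP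
  ⟨hinj, LinearMap.injective_iff_surjective.mp hinj⟩

end Matrix

theorem stmt_8 (n r : ℕ) (L1 : Matrix (Fin n) (Fin n) ℝ) (hL1 : L1.PosDef)
    (Γ Q M : Matrix (Fin r) (Fin r) ℝ) (hQ : IsUnit Q.det)
    (hM : M.PosSemidef) (hΓ : Γ = Q⁻¹ * M * Q) :
    Function.Bijective (fun V : Matrix (Fin n) (Fin r) ℝ => L1 * V + V * Γᵀ) := by
  have hΓT : Γᵀ = Qᵀ * M * (Qᵀ)⁻¹ := by
    rw [hΓ, transpose_mul, transpose_mul, transpose_nonsing_inv,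
      ← conjTranspose_eq_transpose_of_trivial M, hM.isHermitian.eq, Matrix.mul_assoc]
  have hQT : IsUnit Qᵀ.det := by rwa [det_transpose]
  change Function.Bijective (sylvesterMap L1 Γᵀ)
  rw [hΓT]
  exact bijective_sylvesterMap_conj hL1 hM hQT
end

section
/- With X = S ×₁ U₁ ⋯ ×_d U_d in Tucker format (U_μ with orthonormal columns), the subspaces V_μ = { S ×_μ δU_μ ×_{ν≠μ} U_ν : U_μᵀ δU_μ = 0 } for μ = 1,…,d and V_{d+1} = { δS ×₁ U₁ ⋯ ×_d U_d : δS arbitrary } are pairwise orthogonal with respect to the Euclidean inner product on R^{n_1 × ⋯ × n_d}. -/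
open Matrix

/-- Multilinear (Tucker) product: `S ×₁ U₁ ×₂ U₂ ⋯ ×_d U_d`. -/
noncomputable def tuckerProd {d : ℕ} {n r : Fin d → ℕ}
    (S : ((μ : Fin d) → Fin (r μ)) → ℝ)
    (U : (μ : Fin d) → Matrix (Fin (n μ)) (Fin (r μ)) ℝ) :
    ((μ : Fin d) → Fin (n μ)) → ℝ :=
  fun i => ∑ j : (μ : Fin d) → Fin (r μ), S j * ∏ μ, U μ (i μ) (j μ)

/-! Expanding both Tucker products gives
`⟨S ×_μ A_μ, T ×_μ B_μ⟩ = ∑_{j,k} S_j T_k ∏_μ (A_μᵀ B_μ)_{j_μ k_μ}`,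
so the inner product vanishes as soon as a single Gram factor `A_μᵀ B_μ` is zero.
For directions in two different modes `μ ≠ ν` the `ν`-th factor is `U_νᵀ δU_ν = 0`;
for a mode direction against a core direction the `μ`-th factor is
`δU_μᵀ U_μ = (U_μᵀ δU_μ)ᵀ = 0`. -/

section

variable {d : ℕ} {n r s : Fin d → ℕ}

lemma sum_tuckerProd_mul_tuckerProd (S : ((μ : Fin d) → Fin (r μ)) → ℝ)
    (T : ((μ : Fin d) → Fin (s μ)) → ℝ)
    (A : (μ : Fin d) → Matrix (Fin (n μ)) (Fin (r μ)) ℝ)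
    (B : (μ : Fin d) → Matrix (Fin (n μ)) (Fin (s μ)) ℝ) :
    ∑ i, tuckerProd S A i * tuckerProd T B i
      = ∑ j, ∑ k, S j * T k * ∏ μ, ((A μ)ᵀ * B μ) (j μ) (k μ) := by
  have gram (j : (μ : Fin d) → Fin (r μ)) (k : (μ : Fin d) → Fin (s μ)) :
      ∏ μ, ((A μ)ᵀ * B μ) (j μ) (k μ)
        = ∑ i : (μ : Fin d) → Fin (n μ), ∏ μ, A μ (i μ) (j μ) * B μ (i μ) (k μ) := by
    simp only [mul_apply, transpose_apply]
    exact Fintype.prod_sum _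
  simp only [tuckerProd, Finset.sum_mul_sum]
  simp only [gram, Finset.mul_sum]
  rw [Finset.sum_comm]
  refine Finset.sum_congr rfl fun j _ => ?_
  rw [Finset.sum_comm]
  refine Finset.sum_congr rfl fun k _ => Finset.sum_congr rfl fun i _ => ?_
  rw [Finset.prod_mul_distrib]
  ring

lemma sum_tuckerProd_mul_tuckerProd_eq_zero {S : ((μ : Fin d) → Fin (r μ)) → ℝ}
    {T : ((μ : Fin d) → Fin (s μ)) → ℝ}
    {A : (μ : Fin d) → Matrix (Fin (n μ)) (Fin (r μ)) ℝ}
    {B : (μ : Fin d) → Matrix (Fin (n μ)) (Fin (s μ)) ℝ} {μ : Fin d}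
    (hAB : (A μ)ᵀ * B μ = 0) :
    ∑ i, tuckerProd S A i * tuckerProd T B i = 0 := by
  rw [sum_tuckerProd_mul_tuckerProd]
  refine Finset.sum_eq_zero fun j _ => Finset.sum_eq_zero fun k _ => ?_
  rw [Finset.prod_eq_zero (Finset.mem_univ μ) (by rw [hAB]; rfl), mul_zero]

end

theorem stmt_12_general (d : ℕ) (n r : Fin d → ℕ)
    (S : ((μ : Fin d) → Fin (r μ)) → ℝ)
    (U : (μ : Fin d) → Matrix (Fin (n μ)) (Fin (r μ)) ℝ) :
    (∀ μ ν : Fin d, μ ≠ ν →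
      ∀ (δUμ : Matrix (Fin (n μ)) (Fin (r μ)) ℝ)
        (δUν : Matrix (Fin (n ν)) (Fin (r ν)) ℝ),
        (U μ)ᵀ * δUμ = 0 → (U ν)ᵀ * δUν = 0 →
        ∑ i, tuckerProd S (Function.update U μ δUμ) i *
              tuckerProd S (Function.update U ν δUν) i = 0) ∧
    (∀ (μ : Fin d) (δUμ : Matrix (Fin (n μ)) (Fin (r μ)) ℝ),
        (U μ)ᵀ * δUμ = 0 →
        ∀ δS : ((μ : Fin d) → Fin (r μ)) → ℝ,
        ∑ i, tuckerProd S (Function.update U μ δUμ) i * tuckerProd δS U i = 0) := by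
  constructor
  · intro μ ν hμν δUμ δUν _ hν
    apply sum_tuckerProd_mul_tuckerProd_eq_zero (μ := ν)
    rwa [Function.update_of_ne hμν.symm, Function.update_self]
  · intro μ δUμ hμ δS
    apply sum_tuckerProd_mul_tuckerProd_eq_zero (μ := μ)
    rw [Function.update_self, ← transpose_transpose (U μ), ← transpose_mul, hμ, transpose_zero]

theorem stmt_12 (d : ℕ) (n r : Fin d → ℕ)
    (S : ((μ : Fin d) → Fin (r μ)) → ℝ)
    (U : (μ : Fin d) → Matrix (Fin (n μ)) (Fin (r μ)) ℝ)
    (hU : ∀ μ, (U μ)ᵀ * U μ = 1) :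
    (∀ μ ν : Fin d, μ ≠ ν →
      ∀ (δUμ : Matrix (Fin (n μ)) (Fin (r μ)) ℝ)
        (δUν : Matrix (Fin (n ν)) (Fin (r ν)) ℝ),
        (U μ)ᵀ * δUμ = 0 → (U ν)ᵀ * δUν = 0 →
        ∑ i, tuckerProd S (Function.update U μ δUμ) i *
              tuckerProd S (Function.update U ν δUν) i = 0) ∧
    (∀ (μ : Fin d) (δUμ : Matrix (Fin (n μ)) (Fin (r μ)) ℝ),
        (U μ)ᵀ * δUμ = 0 →
        ∀ δS : ((μ : Fin d) → Fin (r μ)) → ℝ,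
        ∑ i, tuckerProd S (Function.update U μ δUμ) i * tuckerProd δS U i = 0) :=
  stmt_12_general d n r S U
end
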